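/- arXiv:1512.09109 — 2 statements merged into one kernel-verified Lean document; each statement's English description precedes it below -/
import Mathlib

section
/- Let R be a commutative ring, q ∈ R, and n ≥ 1. Let X be the n×n diagonal matrix over the ring R[e^{±n∂}] (polynomials in a central grading operator satisfying e^{n∂} · x = q^n x · e^{n∂}) with diagonal entries q^{n-1}e^{n∂}, q^{n-2}e^{n∂}, ..., q e^{n∂}, e^{n∂}, and let Y be the n×n matrix with entries Y_{i,i+1} = 1 for 1 ≤ i ≤ n-1, Y_{n,1} = x, and all other entries 0. Then X·Y = q · Y·X as n×n matrices. -/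
open Matrix

/-- With `X` the diagonal matrix with entries `q^{n-1-i} E` (where `E` stands for the
grading operator `e^{n∂}` satisfying `E·x = q^n·x·E`, and `q` is a central scalar), and `Y` the
cyclic matrix with superdiagonal entries `1` and the corner entry `x`, one has `X·Y = q·(Y·X)`. -/
theorem stmt1 (n : ℕ) (hn : 1 ≤ n) (A : Type*) [Ring A] (q E x : A)
    (hq : ∀ a : A, q * a = a * q)
    (hEx : E * x = q ^ n * (x * E)) :
    (Matrix.diagonal (fun i : Fin n => q ^ (n - 1 - (i : ℕ)) * E)) *
      (Matrix.of fun i j : Fin n =>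
        if (i : ℕ) + 1 = (j : ℕ) then (1 : A)
        else if (i : ℕ) = n - 1 ∧ (j : ℕ) = 0 then x else 0)
    = q • ((Matrix.of fun i j : Fin n =>
        if (i : ℕ) + 1 = (j : ℕ) then (1 : A)
        else if (i : ℕ) = n - 1 ∧ (j : ℕ) = 0 then x else 0) *
      (Matrix.diagonal (fun i : Fin n => q ^ (n - 1 - (i : ℕ)) * E))) := by

  have hqn : ∀ a : A, q ^ n * a = a * q ^ n :=
    fun a => ((Commute.pow_left (hq a) n)).eq
  ext i j
  rw [Matrix.diagonal_mul, Matrix.smul_apply, Matrix.mul_diagonal, smul_eq_mul]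
  simp only [Matrix.of_apply]
  split_ifs with h1 h2
  · -- superdiagonal
    have hk : n - 1 - (i : ℕ) = (n - 1 - (j : ℕ)) + 1 := by
      have := j.isLt; omega
    rw [hk, pow_succ, mul_one, one_mul]
    rw [← mul_assoc q, hq (q ^ (n - 1 - (j : ℕ))), mul_assoc]
  · -- corner
    obtain ⟨hi, hj⟩ := h2
    have h0 : n - 1 - (i : ℕ) = 0 := by omega
    have hn1 : n - 1 - (j : ℕ) = n - 1 := by omega
    rw [h0, hn1, pow_zero, one_mul, hEx]
    rw [← mul_assoc q x, hq x, mul_assoc x q, ← mul_assoc q (q ^ (n-1)), ← pow_succ']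
    have he : n - 1 + 1 = n := by omega
    rw [he, ← mul_assoc x, ← hqn x, mul_assoc]
  · simp
end

section
/- Let q be an invertible element of ℂ[[ħ]]. The bilinear map φ on the Lie algebra of matrix q-difference operators defined by φ(M₁ ⊗ D^k Z^l, M₂ ⊗ D^{k'} Z^{-l'}) = tr(M₁M₂) · q^{-lk'} · (1-q^{l(k+k')})/(1-q^{k+k'}) if l = l' and 0 otherwise (where (1-q^{l(k+k')})/(1-q^{k+k'}) denotes the evaluation of ∑_{i=0}^{l-1} x^i at x = q^{k+k'} when l ≥ 0, extended anti-symmetrically) satisfies the 2-cocycle condition: φ([a,b],c) + φ([b,c],a) + φ([c,a],b) = 0 for basis elements a = M₁⊗D^{k₁}Z^{l₁}, b = M₂⊗D^{k₂}Z^{l₂}, c = M₃⊗D^{k₃}Z^{l₃} of the algebra 𝔡^{(n)}_q = M_n ⊗ 𝔡_q. -/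
open Matrix

/-- The scalar `(1-q^{l(k+k')})/(1-q^{k+k'})`-type factor entering the 2-cocycle on matrix
`q`-difference operators: for `l ≥ 0` it is `q^{-lk'} · (∑_{i<l} (q^{k+k'})^i)` (the evaluation of
`(1-x^l)/(1-x)` at `x = q^{k+k'}`), and it is extended anti-symmetrically to `l < 0`. -/
noncomputable def cocFactor {R : Type*} [CommRing R] (q : Rˣ) (k k' l : ℤ) : R :=
  if 0 ≤ l then
    ((q ^ (-(l * k')) : Rˣ) : R) * ∑ i ∈ Finset.range l.toNat, (((q ^ (k + k') : Rˣ) : R)) ^ i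
  else
    -(((q ^ (l * k) : Rˣ) : R) * ∑ i ∈ Finset.range (-l).toNat, (((q ^ (k + k') : Rˣ) : R)) ^ i)

/-- The 2-cocycle `φ` on `𝔡^{(n)}_q = M_n ⊗ 𝔡_q`, evaluated on basis elements
`M₁ ⊗ D^{k₁} Z^{l₁}` and `M₂ ⊗ D^{k₂} Z^{l₂}`: it vanishes unless `l₁ + l₂ = 0`, and equals
`tr(M₁M₂)·q^{-l₁k₂}·(1-q^{l₁(k₁+k₂)})/(1-q^{k₁+k₂})` otherwise. -/
noncomputable def phiQ {R : Type*} [CommRing R] (q : Rˣ) (n : ℕ)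
    (M₁ : Matrix (Fin n) (Fin n) R) (k₁ l₁ : ℤ)
    (M₂ : Matrix (Fin n) (Fin n) R) (k₂ l₂ : ℤ) : R :=
  if l₁ + l₂ = 0 then (M₁ * M₂).trace * cocFactor q k₁ k₂ l₁ else 0

/-- `φ([a,b], c)` for basis elements `a = M₁⊗D^{k₁}Z^{l₁}`, `b = M₂⊗D^{k₂}Z^{l₂}`,
`c = M₃⊗D^{k₃}Z^{l₃}`, using the multiplication rule
`(D^{k₁}Z^{l₁})(D^{k₂}Z^{l₂}) = q^{-k₂l₁} D^{k₁+k₂} Z^{l₁+l₂}` in `𝔡_q` (from `DZ = qZD`). -/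
noncomputable def phiBr {R : Type*} [CommRing R] (q : Rˣ) (n : ℕ)
    (M₁ : Matrix (Fin n) (Fin n) R) (k₁ l₁ : ℤ)
    (M₂ : Matrix (Fin n) (Fin n) R) (k₂ l₂ : ℤ)
    (M₃ : Matrix (Fin n) (Fin n) R) (k₃ l₃ : ℤ) : R :=
  ((q ^ (-(k₂ * l₁)) : Rˣ) : R) * phiQ q n (M₁ * M₂) (k₁ + k₂) (l₁ + l₂) M₃ k₃ l₃
    - ((q ^ (-(k₁ * l₂)) : Rˣ) : R) * phiQ q n (M₂ * M₁) (k₁ + k₂) (l₁ + l₂) M₃ k₃ l₃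

/-!
Write `cocFactor q k k' l = q^{-lk'} G(l)`, where `G` is the geometric sum in `x = q^{k+k'}`,
extended to negative `l` so that `G(a + b) = G(a) + xᵃ G(b)` for all integers `a, b`; in
particular `G(-l) = -x^{-l} G(l)`. Unless `l₁ + l₂ + l₃ = 0` every term of the cocycle sum
vanishes. Otherwise, by cyclic invariance of the trace, the sum is a combination of
`tr(M₁M₂M₃)` and `tr(M₂M₁M₃)` whose coefficients are one scalar expression evaluated at the
indices `(1,2,3)` and `(2,1,3)`. In it all three geometric sums share the base
`x = q^{k₁+k₂+k₃}`, and splitting `G(l₁ + l₂)` by the shift rule cancels the `G(l₁)` and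
`G(l₂)` terms.
-/

section IntGeomSum

variable {R : Type*} [CommRing R]

/-- `∑_{0 ≤ i < l} xⁱ`, extended to `l < 0` as `-∑_{l ≤ i < 0} xⁱ`. -/
noncomputable def intGeomSum (x : Rˣ) (l : ℤ) : R :=
  if 0 ≤ l then ∑ i ∈ Finset.range l.toNat, (x : R) ^ i
  else -(((x ^ l : Rˣ) : R) * ∑ i ∈ Finset.range (-l).toNat, (x : R) ^ i)

lemma Units.val_zpow_of_nonneg (x : Rˣ) {l : ℤ} (h : 0 ≤ l) :
    ((x ^ l : Rˣ) : R) = (x : R) ^ l.toNat := by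
  conv_lhs => rw [← Int.toNat_of_nonneg h, zpow_natCast]
  rfl

lemma intGeomSum_zero (x : Rˣ) : intGeomSum x 0 = (0 : R) := by
  simp [intGeomSum]

lemma intGeomSum_add_one (x : Rˣ) (l : ℤ) :
    intGeomSum x (l + 1) = intGeomSum x l + ((x ^ l : Rˣ) : R) := by
  rcases le_or_gt 0 l with hl | hl
  · rw [intGeomSum, intGeomSum, if_pos (by omega), if_pos hl,
      show (l + 1).toNat = l.toNat + 1 by omega, Finset.sum_range_succ,
      Units.val_zpow_of_nonneg x hl]
  obtain rfl | _ : l = -1 ∨ l < -1 := by omega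
  · simp [intGeomSum]
  rw [intGeomSum, intGeomSum, if_neg (by omega), if_neg (by omega),
    show (-l).toNat = (-(l + 1)).toNat + 1 by omega, geom_sum_succ]
  have hx : ((x ^ l : Rˣ) : R) * x = ((x ^ (l + 1) : Rˣ) : R) := by
    rw [← Units.val_mul, _root_.zpow_add_one]
  linear_combination (∑ i ∈ Finset.range (-(l + 1)).toNat, (x : R) ^ i) * hx

lemma intGeomSum_add (x : Rˣ) (a b : ℤ) :
    intGeomSum x (a + b) = intGeomSum x a + ((x ^ a : Rˣ) : R) * intGeomSum x b := by
  induction b using Int.induction_on with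
  | zero => simp [intGeomSum_zero]
  | succ b ih =>
    rw [← add_assoc, intGeomSum_add_one, ih, intGeomSum_add_one, _root_.zpow_add, Units.val_mul]
    ring
  | pred b ih =>
    have e₁ := intGeomSum_add_one x (a + (-b - 1))
    have e₂ := intGeomSum_add_one x (-b - 1)
    rw [show a + (-b - 1) + 1 = a + -b by ring, ih] at e₁
    rw [show -(b : ℤ) - 1 + 1 = -b by ring] at e₂
    rw [_root_.zpow_add, Units.val_mul] at e₁
    linear_combination -e₁ + ((x ^ a : Rˣ) : R) * e₂

lemma intGeomSum_neg (x : Rˣ) (l : ℤ) :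
    intGeomSum x (-l) = -(((x ^ (-l) : Rˣ) : R) * intGeomSum x l) := by
  have h := intGeomSum_add x (-l) l
  rw [neg_add_cancel, intGeomSum_zero] at h
  linear_combination -h

end IntGeomSum

lemma cocFactor_eq_intGeomSum {R : Type*} [CommRing R] (q : Rˣ) (k k' l : ℤ) :
    cocFactor q k k' l = ((q ^ (-(l * k')) : Rˣ) : R) * intGeomSum (q ^ (k + k')) l := by
  rcases le_or_gt 0 l with hl | hl
  · rw [cocFactor, intGeomSum, if_pos hl, if_pos hl]
  rw [cocFactor, intGeomSum, if_neg (by omega), if_neg (by omega)]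
  have hx : ((q ^ (-(l * k')) : Rˣ) : R) * (((q ^ (k + k')) ^ l : Rˣ) : R)
      = ((q ^ (l * k) : Rˣ) : R) := by
    rw [← Units.val_mul, ← _root_.zpow_mul, ← _root_.zpow_add]
    congr 2
    ring
  linear_combination (∑ i ∈ Finset.range (-l).toNat, ((q ^ (k + k') : Rˣ) : R) ^ i) * hx

/-- The coefficient of `tr(M₁M₂M₃)` in `φ([a,b],c) + φ([b,c],a) + φ([c,a],b)`. -/
lemma cocFactor_cyclic_sum {R : Type*} [CommRing R] (q : Rˣ) {k₁ k₂ k₃ l₁ l₂ l₃ : ℤ}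
    (h : l₁ + l₂ + l₃ = 0) :
    ((q ^ (-(k₂ * l₁)) : Rˣ) : R) * cocFactor q (k₁ + k₂) k₃ (l₁ + l₂)
      + ((q ^ (-(k₃ * l₂)) : Rˣ) : R) * cocFactor q (k₂ + k₃) k₁ (l₂ + l₃)
      + ((q ^ (-(k₁ * l₃)) : Rˣ) : R) * cocFactor q (k₃ + k₁) k₂ (l₃ + l₁) = 0 := by
  obtain rfl : l₃ = -l₁ - l₂ := by omega
  rw [show l₂ + (-l₁ - l₂) = -l₁ by ring, show -l₁ - l₂ + l₁ = -l₂ by ring]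
  simp only [cocFactor_eq_intGeomSum]
  rw [show k₂ + k₃ + k₁ = k₁ + k₂ + k₃ by ring,
    show k₃ + k₁ + k₂ = k₁ + k₂ + k₃ by ring,
    intGeomSum_neg, intGeomSum_neg, intGeomSum_add]
  simp only [← _root_.zpow_mul]
  have hc₁ : ((q ^ (-(k₂ * l₁)) : Rˣ) : R) * ((q ^ (-((l₁ + l₂) * k₃)) : Rˣ) : R)
      = ((q ^ (-(k₃ * l₂)) : Rˣ) : R) * ((q ^ (-(-l₁ * k₁)) : Rˣ) : R)
        * ((q ^ ((k₁ + k₂ + k₃) * -l₁) : Rˣ) : R) := by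
    simp only [← Units.val_mul, ← _root_.zpow_add]
    congr 2
    ring
  have hc₂ : ((q ^ (-(k₂ * l₁)) : Rˣ) : R) * ((q ^ (-((l₁ + l₂) * k₃)) : Rˣ) : R)
        * ((q ^ ((k₁ + k₂ + k₃) * l₁) : Rˣ) : R)
      = ((q ^ (-(k₁ * (-l₁ - l₂))) : Rˣ) : R) * ((q ^ (-(-l₂ * k₂)) : Rˣ) : R)
        * ((q ^ ((k₁ + k₂ + k₃) * -l₂) : Rˣ) : R) := by
    simp only [← Units.val_mul, ← _root_.zpow_add]
    congr 2
    ring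
  linear_combination intGeomSum (q ^ (k₁ + k₂ + k₃)) l₁ * hc₁
    + intGeomSum (q ^ (k₁ + k₂ + k₃)) l₂ * hc₂

/-- The bilinear form `φ` on `𝔡^{(n)}_q = M_n ⊗ 𝔡_q` satisfies the 2-cocycle
condition `φ([a,b],c) + φ([b,c],a) + φ([c,a],b) = 0` on basis elements. -/
theorem stmt9 (R : Type*) [CommRing R] (q : Rˣ) (n : ℕ)
    (M₁ M₂ M₃ : Matrix (Fin n) (Fin n) R) (k₁ l₁ k₂ l₂ k₃ l₃ : ℤ) :
    phiBr q n M₁ k₁ l₁ M₂ k₂ l₂ M₃ k₃ l₃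
      + phiBr q n M₂ k₂ l₂ M₃ k₃ l₃ M₁ k₁ l₁
      + phiBr q n M₃ k₃ l₃ M₁ k₁ l₁ M₂ k₂ l₂ = 0 := by
  simp only [phiBr, phiQ]
  by_cases h : l₁ + l₂ + l₃ = 0
  swap
  · simp only [if_neg h, if_neg (show l₂ + l₃ + l₁ ≠ 0 by omega),
      if_neg (show l₃ + l₁ + l₂ ≠ 0 by omega), mul_zero, sub_zero, add_zero]
  simp only [if_pos h, if_pos (show l₂ + l₃ + l₁ = 0 by omega),
    if_pos (show l₃ + l₁ + l₂ = 0 by omega)]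
  rw [trace_mul_cycle M₂ M₃ M₁, ← trace_mul_cycle M₁ M₂ M₃,
    trace_mul_cycle M₁ M₃ M₂, ← trace_mul_cycle M₂ M₁ M₃]
  have hs := cocFactor_cyclic_sum q (k₁ := k₂) (k₂ := k₁) (k₃ := k₃) (l₃ := l₃)
    (show l₂ + l₁ + l₃ = 0 by omega)
  rw [add_comm k₂ k₁, add_comm l₂ l₁, add_comm k₁ k₃, add_comm l₁ l₃,
    add_comm k₃ k₂, add_comm l₃ l₂] at hs
  linear_combination (M₁ * M₂ * M₃).trace * cocFactor_cyclic_sum q h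
    - (M₂ * M₁ * M₃).trace * hs
end
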